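/- arXiv:1310.4096 — 2 statements merged into one kernel-verified Lean document; each statement's English description precedes it below -/
import Mathlib

section
/- Let P = x₀x₁…x_h be a longest path containing a fixed pair e = x_i x_{i+1} in the graph D ∪ {e}, let R be the set of endpoints (other than x₀) of paths obtainable from P by elementary rotations fixing x₀ that preserve the edge e, and let R⁻, R⁺ be the sets of vertices immediately preceding and following vertices of R along P. Then N_D(R) \ R ⊆ R⁻ ∪ R⁺ ∪ {x_i, x_{i+1}}. -/
open SimpleGraph

/-- `f : Fin (h+1) → V` is a path of length `h` in the graph `G`. -/
def IsPathOn {V : Type*} (G : SimpleGraph V) (h : ℕ) (f : Fin (h + 1) → V) : Prop :=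
  Function.Injective f ∧ ∀ i : Fin h, G.Adj (f i.castSucc) (f i.succ)

/-- An elementary rotation (with fixed first endpoint, performed along an edge of `D`
to the last vertex, and forbidden from destroying the edge `e`) transforming the path
`f = x₀…x_h` into `f' = x₀…x_j x_h x_{h-1}…x_{j+1}`. -/
def ElemRotation {V : Type*} (D : SimpleGraph V) (e : Sym2 V) (h : ℕ)
    (f f' : Fin (h + 1) → V) : Prop :=
  ∃ j : ℕ, ∃ hj : j + 1 < h,
    D.Adj (f ⟨j, by omega⟩) (f (Fin.last h)) ∧
    s(f ⟨j, by omega⟩, f ⟨j + 1, by omega⟩) ≠ e ∧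
    (∀ i : Fin (h + 1), (i : ℕ) ≤ j → f' i = f i) ∧
    (∀ i : Fin (h + 1), ∀ _ : j < (i : ℕ), f' i = f ⟨h + j + 1 - (i : ℕ), by omega⟩)

lemma fcast {n : ℕ} {V : Type*} (f : Fin n → V) (a b : ℕ) (ha : a < n) (hb : b < n) (hab : a = b) :
    f ⟨a, ha⟩ = f ⟨b, hb⟩ := by subst hab; rfl

lemma adjOn {V : Type*} {G : SimpleGraph V} {h : ℕ} {f : Fin (h+1) → V}
    (hf : IsPathOn G h f) (k : ℕ) (hk : k < h) :
    G.Adj (f ⟨k, by omega⟩) (f ⟨k+1, by omega⟩) := hf.2 ⟨k, hk⟩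

lemma rot_step {V : Type*} {D : SimpleGraph V} {e : Sym2 V} {h : ℕ}
    (G : SimpleGraph V) (hDG : D ≤ G) {f f' : Fin (h+1) → V}
    (hf : IsPathOn G h f) (hrot : ElemRotation D e h f f') :
    IsPathOn G h f' ∧ f' 0 = f 0 ∧ (∀ v, (∃ a, f' a = v) ↔ (∃ a, f a = v)) ∧
    (∃ j, ∃ hj : j + 1 < h, f' (Fin.last h) = f ⟨j+1, by omega⟩ ∧
      s(f ⟨j, by omega⟩, f ⟨j+1, by omega⟩) ≠ e ∧
      ∀ k, ∀ hk : k < h,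
        s(f ⟨k, by omega⟩, f ⟨k+1, by omega⟩) ≠ s(f ⟨j, by omega⟩, f ⟨j+1, by omega⟩) →
        ∃ m, ∃ hm : m < h,
          s(f' ⟨m, by omega⟩, f' ⟨m+1, by omega⟩) = s(f ⟨k, by omega⟩, f ⟨k+1, by omega⟩)) := by
  obtain ⟨j, hj, hadj, hne, hle, hgt⟩ := hrot
  have Hle : ∀ p (hp : p < h + 1), p ≤ j → f' ⟨p, hp⟩ = f ⟨p, hp⟩ :=
    fun p hp hpj => hle ⟨p, hp⟩ hpj
  have Hgt : ∀ p (hp : p < h + 1) (hpj : j < p), f' ⟨p, hp⟩ = f ⟨h + j + 1 - p, by omega⟩ :=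
    fun p hp hpj => hgt ⟨p, hp⟩ hpj
  have hinj : Function.Injective f' := by
    intro a b hab
    obtain ⟨a, ha⟩ := a; obtain ⟨b, hb⟩ := b
    refine Fin.ext ?_
    show a = b
    rcases le_or_gt a j with h1 | h1 <;> rcases le_or_gt b j with h2 | h2
    · rw [Hle a ha h1, Hle b hb h2] at hab
      have := hf.1 hab; rw [Fin.mk.injEq] at this; exact this
    · rw [Hle a ha h1, Hgt b hb h2] at hab
      have := hf.1 hab; rw [Fin.mk.injEq] at this; omega
    · rw [Hgt a ha h1, Hle b hb h2] at hab
      have := hf.1 hab; rw [Fin.mk.injEq] at this; omega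
    · rw [Hgt a ha h1, Hgt b hb h2] at hab
      have := hf.1 hab; rw [Fin.mk.injEq] at this; omega
  have hadj' : ∀ i : Fin h, G.Adj (f' i.castSucc) (f' i.succ) := by
    intro ⟨p, hp⟩
    show G.Adj (f' ⟨p, by omega⟩) (f' ⟨p+1, by omega⟩)
    rcases lt_trichotomy p j with h1 | h1 | h1
    · rw [Hle p (by omega) h1.le, Hle (p+1) (by omega) h1]
      exact adjOn hf p hp
    · subst h1
      rw [Hle p (by omega) le_rfl, Hgt (p+1) (by omega) (by omega),
        fcast f (h+p+1-(p+1)) h (by omega) (by omega) (by omega)]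
      exact hDG hadj
    · rw [Hgt p (by omega) h1, Hgt (p+1) (by omega) (by omega),
        fcast f (h+j+1-p) ((h+j-p)+1) (by omega) (by omega) (by omega),
        fcast f (h+j+1-(p+1)) (h+j-p) (by omega) (by omega) (by omega)]
      exact (adjOn hf (h+j-p) (by omega)).symm
  refine ⟨⟨hinj, hadj'⟩, Hle 0 (by omega) (by omega), ?_, j, hj, ?_, hne, ?_⟩
  · intro v
    constructor
    · rintro ⟨⟨a, ha⟩, rfl⟩
      rcases le_or_gt a j with h1 | h1
      · exact ⟨_, (Hle a ha h1).symm⟩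
      · exact ⟨_, (Hgt a ha h1).symm⟩
    · rintro ⟨⟨a, ha⟩, rfl⟩
      rcases le_or_gt a j with h1 | h1
      · exact ⟨⟨a, ha⟩, Hle a ha h1⟩
      · refine ⟨⟨h+j+1-a, by omega⟩, ?_⟩
        rw [Hgt (h+j+1-a) (by omega) (by omega)]
        exact fcast f _ a (by omega) ha (by omega)
  · rw [show Fin.last h = ⟨h, by omega⟩ from rfl, Hgt h (by omega) (by omega)]
    exact fcast f _ (j+1) (by omega) (by omega) (by omega)
  · intro k hk hne'
    rcases lt_trichotomy k j with h1 | h1 | h1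
    · refine ⟨k, hk, ?_⟩
      rw [Hle k (by omega) h1.le, Hle (k+1) (by omega) h1]
    · exact absurd (by subst h1; rfl) hne'
    · refine ⟨h+j-k, by omega, ?_⟩
      rw [Hgt (h+j-k) (by omega) (by omega), Hgt ((h+j-k)+1) (by omega) (by omega),
        fcast f (h+j+1-(h+j-k)) (k+1) (by omega) (by omega) (by omega),
        fcast f (h+j+1-((h+j-k)+1)) k (by omega) (by omega) (by omega)]
      exact Sym2.eq_swap

/-- Pósa's rotation lemma for paths forced to contain a fixed pair `e`:
if `P = x₀…x_h` is a longest path containing `e = x_i x_{i+1}` in `D ∪ {e}`, `R` is the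
set of endpoints (other than `x₀`) of paths obtained from `P` by elementary rotations
fixing `x₀` and preserving `e`, and `R⁻`, `R⁺` are the predecessors and successors of
`R` along `P`, then `N_D(R) \ R ⊆ R⁻ ∪ R⁺ ∪ {x_i, x_{i+1}}`. -/
theorem posa_rotation_endpoints {V : Type*} [Fintype V] [DecidableEq V]
    (D : SimpleGraph V) (h : ℕ) (x : Fin (h + 1) → V)
    (i : ℕ) (hi : i + 1 ≤ h) (e : Sym2 V)
    (he : e = s(x ⟨i, by omega⟩, x ⟨i + 1, by omega⟩))
    (hpath : IsPathOn (D ⊔ SimpleGraph.fromEdgeSet {e}) h x)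
    (hlongest : ∀ (h' : ℕ) (y : Fin (h' + 1) → V),
      IsPathOn (D ⊔ SimpleGraph.fromEdgeSet {e}) h' y →
      (∃ j : Fin h', s(y j.castSucc, y j.succ) = e) → h' ≤ h)
    (R : Set V)
    (hR : R = {v | ∃ f : Fin (h + 1) → V,
      Relation.ReflTransGen (ElemRotation D e h) x f ∧ f (Fin.last h) = v ∧ v ≠ x 0}) :
    ∀ w : V, (∃ v ∈ R, D.Adj v w) → w ∉ R →
      w ∈ ({u | ∃ j : Fin h, x j.succ ∈ R ∧ u = x j.castSucc} ∪
           {u | ∃ j : Fin h, x j.castSucc ∈ R ∧ u = x j.succ} ∪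
           {x ⟨i, by omega⟩, x ⟨i + 1, by omega⟩} : Set V) := by
  set G := D ⊔ SimpleGraph.fromEdgeSet {e} with hGdef
  have hDG : D ≤ G := le_sup_left
  have hx00 : x 0 = x ⟨0, by omega⟩ := congrArg x (Fin.ext (by simp))
  -- the invariant along rotations
  have key : ∀ f : Fin (h+1) → V, Relation.ReflTransGen (ElemRotation D e h) x f →
      IsPathOn G h f ∧ f 0 = x 0 ∧ (∀ u, (∃ a, f a = u) ↔ (∃ a, x a = u)) ∧
      (∃ k, ∃ hk : k < h, s(f ⟨k, by omega⟩, f ⟨k+1, by omega⟩) = e) ∧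
      (∀ k, ∀ hk : k < h, x ⟨k, by omega⟩ ∉ R → x ⟨k+1, by omega⟩ ∉ R →
        ∃ m, ∃ hm : m < h, s(f ⟨m, by omega⟩, f ⟨m+1, by omega⟩)
          = s(x ⟨k, by omega⟩, x ⟨k+1, by omega⟩)) := by
    intro f hf
    induction hf with
    | refl =>
      exact ⟨hpath, rfl, fun u => Iff.rfl, ⟨i, by omega, he.symm⟩,
        fun k hk _ _ => ⟨k, hk, rfl⟩⟩
    | @tail b c hxb hbc ih =>
      obtain ⟨ihp, ih0, ihr, ih4, ih5⟩ := ih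
      obtain ⟨hp', h0', hrange', j, hj, hlast', hne', hsurv⟩ := rot_step G hDG ihp hbc
      have hcreach : Relation.ReflTransGen (ElemRotation D e h) x c := hxb.tail hbc
      have hbR : b ⟨j+1, by omega⟩ ∈ R := by
        rw [hR]
        refine ⟨c, hcreach, hlast', ?_⟩
        intro h0
        rw [← ih0] at h0
        have := ihp.1 (h0 : b ⟨j+1, by omega⟩ = b 0)
        have := congrArg Fin.val this
        simp at this
      refine ⟨hp', h0'.trans ih0, fun u => (hrange' u).trans (ihr u), ?_, ?_⟩
      · obtain ⟨k, hk, hke⟩ := ih4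
        have hne2 : s(b ⟨k, by omega⟩, b ⟨k+1, by omega⟩)
            ≠ s(b ⟨j, by omega⟩, b ⟨j+1, by omega⟩) := by
          rw [hke]; exact fun hh => hne' hh.symm
        obtain ⟨m, hm, hme⟩ := hsurv k hk hne2
        exact ⟨m, hm, hme.trans hke⟩
      · intro k hk h1 h2
        obtain ⟨m, hm, hme⟩ := ih5 k hk h1 h2
        have hne2 : s(b ⟨m, by omega⟩, b ⟨m+1, by omega⟩)
            ≠ s(b ⟨j, by omega⟩, b ⟨j+1, by omega⟩) := by
          intro heq
          rw [heq] at hme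
          rcases Sym2.eq_iff.1 hme with ⟨hb1, hb2⟩ | ⟨hb1, hb2⟩
          · exact h2 (hb2 ▸ hbR)
          · exact h1 (hb2 ▸ hbR)
        obtain ⟨m', hm', hme'⟩ := hsurv m hm hne2
        exact ⟨m', hm', hme'.trans hme⟩
  intro w hvw hwR
  obtain ⟨v, hvR, hadj⟩ := hvw
  rw [hR] at hvR
  obtain ⟨f, hreach, hflast, hv0⟩ := hvR
  obtain ⟨fp, f0, frange, f4, f5⟩ := key f hreach
  -- step 1 : w is on the path f
  have hwrange : ∃ a : Fin (h+1), f a = w := by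
    by_contra hcon
    push_neg at hcon
    set y : Fin (h+1+1) → V := fun a => if hA : (a:ℕ) < h+1 then f ⟨a, hA⟩ else w with hy
    have hyval : ∀ p (hp2 : p < h+1+1) (hp : p < h+1), y ⟨p, hp2⟩ = f ⟨p, hp⟩ :=
      fun p hp2 hp => dif_pos hp
    have hyw : ∀ p (hp2 : p < h+1+1) (hp : ¬ p < h+1), y ⟨p, hp2⟩ = w :=
      fun p hp2 hp => dif_neg hp
    have hypath : IsPathOn G (h+1) y := by
      constructor
      · intro ⟨a, ha⟩ ⟨b, hb⟩ hab
        refine Fin.ext ?_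
        show a = b
        rcases lt_or_ge a (h+1) with h1 | h1 <;> rcases lt_or_ge b (h+1) with h2 | h2
        · rw [hyval a ha h1, hyval b hb h2] at hab
          have := fp.1 hab; rw [Fin.mk.injEq] at this; exact this
        · rw [hyval a ha h1, hyw b hb (by omega)] at hab
          exact absurd hab (hcon _)
        · rw [hyw a ha (by omega), hyval b hb h2] at hab
          exact absurd hab.symm (hcon _)
        · omega
      · intro ⟨p, hp⟩
        show G.Adj (y ⟨p, by omega⟩) (y ⟨p+1, by omega⟩)
        rcases lt_or_ge (p+1) (h+1) with h1 | h1
        · rw [hyval p (by omega) (by omega), hyval (p+1) (by omega) h1]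
          exact adjOn fp p (by omega)
        · rw [hyval p (by omega) (by omega), hyw (p+1) (by omega) (by omega),
            fcast f p h (by omega) (by omega) (by omega),
            show f ⟨h, by omega⟩ = v from hflast]
          exact hDG hadj
    obtain ⟨k, hk, hke⟩ := f4
    have := hlongest (h+1) y hypath
      ⟨⟨k, by omega⟩, by
        show s(y ⟨k, by omega⟩, y ⟨k+1, by omega⟩) = e
        rw [hyval k (by omega) (by omega), hyval (k+1) (by omega) (by omega)]
        exact hke⟩
    omega
  obtain ⟨⟨m, hm1⟩, hfmw⟩ := hwrange
  have hvnew : v ≠ w := hadj.ne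
  have hmh : m < h := by
    rcases lt_or_ge m h with h1 | h1
    · exact h1
    · exfalso
      have hm' : m = h := by omega
      subst hm'
      exact hvnew (hflast.symm.trans hfmw)
  -- suppose w is in none of the target sets
  by_contra hgoal
  simp only [Set.mem_union, Set.mem_setOf_eq, Set.mem_insert_iff,
    Set.mem_singleton_iff, not_or] at hgoal
  obtain ⟨⟨hA, hB⟩, hwi, hwi1⟩ := hgoal
  -- w is on the original path x
  obtain ⟨⟨k, hk1⟩, hxkw⟩ := (frange w).1 ⟨_, hfmw⟩
  have hkh : k < h := by
    rcases lt_or_ge k h with h1 | h1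
    · exact h1
    · exfalso
      refine hwR ?_
      rw [hR]
      refine ⟨x, Relation.ReflTransGen.refl, ?_, ?_⟩
      · show x ⟨h, by omega⟩ = w
        rw [fcast x h k (by omega) (by omega) (by omega)]
        exact hxkw
      · intro h0
        rw [hx00] at h0
        have := hpath.1 (hxkw.trans h0 : x ⟨k, hk1⟩ = x ⟨0, by omega⟩)
        rw [Fin.mk.injEq] at this
        omega
  -- the x-edge(s) at w survive in f; deduce s(f m, f (m+1)) is an x-edge at w
  have hwRk : x ⟨k, by omega⟩ ∉ R := by
    rw [show x ⟨k, by omega⟩ = w from hxkw]; exact hwR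
  have hxk1R : x ⟨k+1, by omega⟩ ∉ R := by
    intro hmem
    exact hA ⟨⟨k, hkh⟩, hmem, hxkw.symm⟩
  obtain ⟨m1, hm1', hEk⟩ := f5 k hkh hwRk hxk1R
  have hedge : ∃ k2, ∃ hk2 : k2 < h,
      s(f ⟨m, by omega⟩, f ⟨m+1, by omega⟩) = s(x ⟨k2, by omega⟩, x ⟨k2+1, by omega⟩) := by
    rcases Sym2.eq_iff.1 hEk with ⟨hb1, hb2⟩ | ⟨hb1, hb2⟩
    · -- f m1 = x k  = w  ⇒ m1 = m
      have : m1 = m := by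
        have := fp.1 ((hb1.trans hxkw).trans hfmw.symm)
        rw [Fin.mk.injEq] at this; exact this
      subst this
      exact ⟨k, hkh, hEk⟩
    · -- f (m1+1) = x k = w ⇒ m1 + 1 = m
      have hm1m : m1 + 1 = m := by
        have := fp.1 ((hb2.trans hxkw).trans hfmw.symm)
        rw [Fin.mk.injEq] at this; exact this
      have hk0 : 0 < k := by
        rcases Nat.eq_zero_or_pos k with h0 | h0
        · exfalso
          subst h0
          have : (⟨0, by omega⟩ : Fin (h+1)) = ⟨m, by omega⟩ := fp.1 (by
            rw [show f ⟨0, by omega⟩ = x 0 from f0, hx00, hxkw, ← hfmw])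
          rw [Fin.mk.injEq] at this
          omega
        · exact h0
      -- use the other x-edge at w
      have hxk1R' : x ⟨k-1, by omega⟩ ∉ R := by
        intro hmem
        refine hB ⟨⟨k-1, by omega⟩, hmem, ?_⟩
        show w = x ⟨(k-1)+1, by omega⟩
        rw [fcast x ((k-1)+1) k (by omega) (by omega) (by omega)]
        exact hxkw.symm
      have hwRk' : x ⟨(k-1)+1, by omega⟩ ∉ R := by
        rw [fcast x ((k-1)+1) k (by omega) (by omega) (by omega)]
        exact hwRk
      obtain ⟨m2, hm2', hEk1⟩ := f5 (k-1) (by omega) hxk1R' hwRk'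
      have hwk1 : x ⟨(k-1)+1, by omega⟩ = f ⟨m, by omega⟩ := by
        rw [fcast x ((k-1)+1) k (by omega) (by omega) (by omega), hxkw, hfmw]
      rcases Sym2.eq_iff.1 hEk1 with ⟨hc1, hc2⟩ | ⟨hc1, hc2⟩
      · -- f m2 = x (k-1), f (m2+1) = x k = w ⇒ m2 + 1 = m ⇒ m2 = m1 : contradiction
        exfalso
        have hm2m : m2 + 1 = m := by
          have := fp.1 (hc2.trans hwk1)
          rw [Fin.mk.injEq] at this; exact this
        have hm2m1 : m2 = m1 := by omega
        subst hm2m1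
        rw [hEk] at hEk1
        rcases Sym2.eq_iff.1 hEk1 with ⟨hd1, hd2⟩ | ⟨hd1, hd2⟩
        · have := hpath.1 hd1; rw [Fin.mk.injEq] at this; omega
        · have := hpath.1 hd2; rw [Fin.mk.injEq] at this; omega
      · -- f m2 = x k = w ⇒ m2 = m; the edge at position m is the x-edge (k-1, k)
        have hm2m : m2 = m := by
          have := fp.1 (hc1.trans hwk1)
          rw [Fin.mk.injEq] at this; exact this
        subst hm2m
        exact ⟨k-1, by omega, hEk1⟩
  obtain ⟨k2, hk2, hEdge⟩ := hedge
  -- the f-edge at m is not e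
  have hnee : s(f ⟨m, by omega⟩, f ⟨m+1, by omega⟩) ≠ e := by
    intro heq
    rw [he] at heq
    rcases Sym2.eq_iff.1 heq with ⟨hb1, hb2⟩ | ⟨hb1, hb2⟩
    · exact hwi (hfmw.symm.trans hb1)
    · exact hwi1 (hfmw.symm.trans hb1)
  -- f (m+1) is in R
  have hfm1R : f ⟨m+1, by omega⟩ ∈ R := by
    rcases lt_or_ge (m+1) h with hlt | hge
    · -- perform a rotation at pivot m
      set f' : Fin (h+1) → V :=
        fun a => if ha : m < (a:ℕ) then f ⟨h+m+1-(a:ℕ), by have := a.isLt; omega⟩ else f a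
        with hf'
      have hrot : ElemRotation D e h f f' := by
        refine ⟨m, hlt, ?_, hnee, fun a haa => dif_neg (by omega), fun a haa => dif_pos haa⟩
        rw [show f ⟨m, by omega⟩ = w from hfmw, show f (Fin.last h) = v from hflast]
        exact hadj.symm
      rw [hR]
      refine ⟨f', hreach.tail hrot, ?_, ?_⟩
      · show f' ⟨h, by omega⟩ = f ⟨m+1, by omega⟩
        rw [show f' ⟨h, by omega⟩ = f ⟨h+m+1-h, by omega⟩ from dif_pos (show m < h by omega)]
        exact fcast f _ (m+1) (by omega) (by omega) (by omega)
      · intro h0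
        rw [← f0] at h0
        have := fp.1 (h0 : f ⟨m+1, by omega⟩ = f 0)
        have := congrArg Fin.val this
        simp at this
    · have hmh' : m + 1 = h := by omega
      rw [fcast f (m+1) h (by omega) (by omega) hmh', show f ⟨h, by omega⟩ = v from hflast]
      rw [hR]
      exact ⟨f, hreach, hflast, hv0⟩
  -- conclude: w is an x-neighbor of f (m+1) ∈ R
  rcases Sym2.eq_iff.1 hEdge with ⟨hb1, hb2⟩ | ⟨hb1, hb2⟩
  · exact hA ⟨⟨k2, hk2⟩, hb2 ▸ hfm1R, hfmw.symm.trans hb1⟩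
  · exact hB ⟨⟨k2, hk2⟩, hb2 ▸ hfm1R, hfmw.symm.trans hb1⟩
end

section
/- In the MinBox(n, D, α, b) Maker-Breaker game, if Maker always claims a free element from a free active box with maximal danger value, then throughout the game every active box F satisfies danger(F) ≤ b(ln n + 1). -/
/-!
By induction on the rounds, any `k` boxes that are free and active have total danger at most
`b k (1/k + ⋯ + 1/n) - b` after Maker's move, and hence at most `b k (1/k + ⋯ + 1/n)` after
Breaker's next `b` elements; Maker's greedy move then restores the first bound. For `k = 1` this
bounds the danger of a free active box by `b H_n ≤ b (ln n + 1)`. A box that is no longer free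
keeps its danger while Breaker moves and only loses danger while Maker moves.
-/

namespace MinBox

variable {α : Type*} [DecidableEq α]

/-- The box `i` is free: it still has an unclaimed element (w.r.t. Maker's set `M` and
Breaker's set `B`). -/
def Free {n : ℕ} (boxes : Fin n → Finset α) (M B : Finset α) (i : Fin n) : Prop :=
  (boxes i \ (M ∪ B)).Nonempty

/-- The box `i` is active: Maker owns fewer than `a·|Fᵢ|` of its elements. -/
def Active {n : ℕ} (a : ℝ) (boxes : Fin n → Finset α) (M : Finset α) (i : Fin n) : Prop :=
  ((M ∩ boxes i).card : ℝ) < a * ((boxes i).card : ℝ)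

/-- The danger value `danger(Fᵢ) = w_B(Fᵢ) − b·w_M(Fᵢ)` of the box `i`. -/
def danger {n : ℕ} (b : ℕ) (boxes : Fin n → Finset α) (M B : Finset α) (i : Fin n) : ℝ :=
  ((B ∩ boxes i).card : ℝ) - (b : ℝ) * ((M ∩ boxes i).card : ℝ)

end MinBox

open Finset

namespace MinBox

noncomputable def budget (b : ℝ) (n k : ℕ) : ℝ :=
  b * k * ∑ j ∈ Icc k n, (j : ℝ)⁻¹

theorem budget_one (b : ℝ) (n : ℕ) : budget b n 1 = b * harmonic n := by
  simp [budget, harmonic_eq_sum_Icc]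

theorem le_budget {b : ℝ} (hb : 0 ≤ b) {n k : ℕ} (hk : 1 ≤ k) (hkn : k ≤ n) :
    b ≤ budget b n k := by
  have hk0 : (0 : ℝ) < k := by exact_mod_cast hk
  have hfirst : (k : ℝ)⁻¹ ≤ ∑ j ∈ Icc k n, (j : ℝ)⁻¹ :=
    single_le_sum (f := fun j : ℕ => (j : ℝ)⁻¹) (fun j _ => by positivity)
      (mem_Icc.2 ⟨le_rfl, hkn⟩)
  calc b = b * k * (k : ℝ)⁻¹ := by field_simp
    _ ≤ budget b n k := by unfold budget; gcongr

theorem budget_succ (b : ℝ) {n k : ℕ} (hk : 1 ≤ k) (hkn : k ≤ n) :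
    k * budget b n (k + 1) = (k + 1) * (budget b n k - b) := by
  have hk0 : (k : ℝ) ≠ 0 := by positivity
  rw [budget, budget, ← insert_Icc_add_one_left_eq_Icc hkn, sum_insert (by simp)]
  push_cast
  field_simp
  ring

/-- Either `m ∈ S`, or `d m` is at least the average of `d` over `S` and `hd` applies to
`insert m S`; `budget_succ` turns the latter into the drop by `b`. -/
theorem sum_le_budget_sub_of_greedy {ι : Type*} [Fintype ι] [DecidableEq ι] {n : ℕ}
    (hι : Fintype.card ι ≤ n) {b : ℝ} {p : ι → Prop} {d d' : ι → ℝ} {m : ι} (hm : p m)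
    (hmax : ∀ i, p i → d i ≤ d m)
    (hd : ∀ S : Finset ι, S.Nonempty → (∀ i ∈ S, p i) → ∑ i ∈ S, d i ≤ budget b n #S)
    (hd' : ∀ i, d' i ≤ d i - if i = m then b else 0)
    {S : Finset ι} (hS : S.Nonempty) (hSp : ∀ i ∈ S, p i) :
    ∑ i ∈ S, d' i ≤ budget b n #S - b := by
  have hsum : ∑ i ∈ S, d' i ≤ ∑ i ∈ S, d i - if m ∈ S then b else 0 := by
    calc ∑ i ∈ S, d' i ≤ ∑ i ∈ S, (d i - if i = m then b else 0) :=
          sum_le_sum fun i _ => hd' i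
      _ = _ := by rw [sum_sub_distrib, sum_ite_eq']
  by_cases hmS : m ∈ S
  · rw [if_pos hmS] at hsum
    linarith [hd S hS hSp]
  rw [if_neg hmS, sub_zero] at hsum
  set k := #S
  have hk : 1 ≤ k := card_pos.2 hS
  have hkn : k + 1 ≤ n := by
    have := (card_le_univ (insert m S)).trans hι
    rwa [card_insert_of_notMem hmS] at this
  have hwith_m : d m + ∑ i ∈ S, d i ≤ budget b n (k + 1) := by
    have := hd (insert m S) (insert_nonempty m S)
      (fun i hi => (mem_insert.1 hi).elim (fun h => h ▸ hm) (hSp i))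
    rwa [sum_insert hmS, card_insert_of_notMem hmS] at this
  have hle_avg : ∑ i ∈ S, d i ≤ k * d m := by
    simpa using sum_le_card_nsmul S d (d m) fun i hi => hmax i (hSp i hi)
  have hrec := budget_succ b hk (by omega : k ≤ n)
  have hk1 : (0 : ℝ) < k + 1 := by positivity
  have : (k + 1 : ℝ) * ∑ i ∈ S, d i ≤ (k + 1) * (budget b n k - b) := by
    calc (k + 1 : ℝ) * ∑ i ∈ S, d i ≤ k * (d m + ∑ i ∈ S, d i) := by linarith
      _ ≤ k * budget b n (k + 1) := by gcongr
      _ = _ := hrec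
  linarith [le_of_mul_le_mul_left this hk1]

variable {α : Type*} [DecidableEq α] {n : ℕ}

section

variable {boxes : Fin n → Finset α} {i : Fin n}

theorem Free.anti {M₁ M₂ B₁ B₂ : Finset α} (hM : M₁ ⊆ M₂) (hB : B₁ ⊆ B₂)
    (h : Free boxes M₂ B₂ i) : Free boxes M₁ B₁ i :=
  h.mono (sdiff_subset_sdiff subset_rfl (union_subset_union hM hB))

theorem Active.anti {a : ℝ} {M₁ M₂ : Finset α} (hM : M₁ ⊆ M₂) (h : Active a boxes M₂ i) :
    Active a boxes M₁ i :=
  lt_of_le_of_lt (by gcongr) h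

theorem danger_anti_maker (b : ℕ) {M₁ M₂ : Finset α} (B : Finset α) (hM : M₁ ⊆ M₂) :
    danger b boxes M₂ B i ≤ danger b boxes M₁ B i := by
  unfold danger
  gcongr

theorem danger_insert (b : ℕ) {M : Finset α} (B : Finset α) {x : α} (hxi : x ∈ boxes i)
    (hxM : x ∉ M) : danger b boxes (insert x M) B i = danger b boxes M B i - b := by
  rw [danger, danger, insert_inter_of_mem hxi,
    card_insert_of_notMem fun h => hxM (mem_inter.1 h).1]
  push_cast
  ring

theorem sum_card_inter_le_card (hdisj : ∀ i j, i ≠ j → Disjoint (boxes i) (boxes j))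
    (X : Finset α) (S : Finset (Fin n)) : ∑ i ∈ S, #(X ∩ boxes i) ≤ #X := by
  rw [← card_biUnion fun i _ j _ hij =>
    (hdisj i j hij).mono inter_subset_right inter_subset_right]
  exact card_le_card (biUnion_subset.2 fun _ _ => inter_subset_left)

theorem sum_danger_le_add_card (hdisj : ∀ i j, i ≠ j → Disjoint (boxes i) (boxes j))
    (b : ℕ) (M : Finset α) {B₁ B₂ : Finset α} (hB : B₁ ⊆ B₂) (S : Finset (Fin n)) :
    ∑ i ∈ S, danger b boxes M B₂ i ≤ ∑ i ∈ S, danger b boxes M B₁ i + #(B₂ \ B₁) := by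
  have hsplit : ∀ i,
      danger b boxes M B₂ i ≤ danger b boxes M B₁ i + #((B₂ \ B₁) ∩ boxes i) := by
    intro i
    have hcover : B₂ ∩ boxes i ⊆ (B₁ ∩ boxes i) ∪ ((B₂ \ B₁) ∩ boxes i) := by
      rw [← union_inter_distrib_right, union_sdiff_of_subset hB]
    have : (#(B₂ ∩ boxes i) : ℝ) ≤ #(B₁ ∩ boxes i) + #((B₂ \ B₁) ∩ boxes i) := by
      exact_mod_cast (card_le_card hcover).trans (card_union_le _ _)
    unfold danger
    linarith
  calc ∑ i ∈ S, danger b boxes M B₂ i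
      ≤ ∑ i ∈ S, (danger b boxes M B₁ i + #((B₂ \ B₁) ∩ boxes i)) :=
        sum_le_sum fun i _ => hsplit i
    _ ≤ _ := by
      rw [sum_add_distrib]
      gcongr
      exact_mod_cast sum_card_inter_le_card hdisj _ S

theorem danger_eq_of_not_free (b : ℕ) {M B₁ B₂ : Finset α} (hfull : ¬ Free boxes M B₁ i)
    (hB : B₁ ⊆ B₂) (hnew : Disjoint (B₂ \ B₁) M) :
    danger b boxes M B₂ i = danger b boxes M B₁ i := by
  have hsub : boxes i ⊆ M ∪ B₁ := by
    rwa [Free, not_nonempty_iff_eq_empty, sdiff_eq_empty_iff_subset] at hfull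
  have : B₂ ∩ boxes i = B₁ ∩ boxes i := by
    refine Subset.antisymm (fun y hy => ?_) (inter_subset_inter_right hB)
    obtain ⟨hyB, hyi⟩ := mem_inter.1 hy
    refine mem_inter.2 ⟨?_, hyi⟩
    by_contra hyB₁
    exact disjoint_left.1 hnew (mem_sdiff.2 ⟨hyB, hyB₁⟩)
      ((mem_union.1 (hsub hyi)).resolve_right hyB₁)
  rw [danger, danger, this]

end

/-- Round `t` leads from `(M t, B t)` to `(M t, B (t + 1))` by Breaker's move and then to
`(M (t + 1), B (t + 1))` by Maker's greedy move. -/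
structure GreedyPlay (a : ℝ) (b : ℕ) (boxes : Fin n → Finset α) (M B : ℕ → Finset α) :
    Prop where
  disjoint : ∀ i j, i ≠ j → Disjoint (boxes i) (boxes j)
  maker_zero : M 0 = ∅
  breaker_zero : B 0 = ∅
  breaker_mono : ∀ t, B t ⊆ B (t + 1)
  breaker_bias : ∀ t, #(B (t + 1) \ B t) ≤ b
  breaker_new : ∀ t, Disjoint (B (t + 1) \ B t) (M t)
  maker_move : ∀ t, (∃ i, Free boxes (M t) (B (t + 1)) i ∧ Active a boxes (M t) i) →
    ∃ i x, Free boxes (M t) (B (t + 1)) i ∧ Active a boxes (M t) i ∧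
      (∀ j, Free boxes (M t) (B (t + 1)) j → Active a boxes (M t) j →
        danger b boxes (M t) (B (t + 1)) j ≤ danger b boxes (M t) (B (t + 1)) i) ∧
      x ∈ boxes i \ (M t ∪ B (t + 1)) ∧ M (t + 1) = insert x (M t)
  maker_skip : ∀ t, (¬ ∃ i, Free boxes (M t) (B (t + 1)) i ∧ Active a boxes (M t) i) →
    M (t + 1) = M t

namespace GreedyPlay

variable {a : ℝ} {b : ℕ} {boxes : Fin n → Finset α} {M B : ℕ → Finset α}

theorem maker_subset (hp : GreedyPlay a b boxes M B) (t : ℕ) : M t ⊆ M (t + 1) := by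
  by_cases hex : ∃ i, Free boxes (M t) (B (t + 1)) i ∧ Active a boxes (M t) i
  · obtain ⟨_, x, -, -, -, -, hMx⟩ := hp.maker_move t hex
    exact hMx ▸ subset_insert x (M t)
  · exact (hp.maker_skip t hex).ge

theorem sum_danger_succ_le (hp : GreedyPlay a b boxes M B) (t : ℕ) {S : Finset (Fin n)}
    (h : ∑ i ∈ S, danger b boxes (M t) (B t) i ≤ budget b n #S - b) :
    ∑ i ∈ S, danger b boxes (M t) (B (t + 1)) i ≤ budget b n #S := by
  have hbias : (#(B (t + 1) \ B t) : ℝ) ≤ b := by exact_mod_cast hp.breaker_bias t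
  linarith [sum_danger_le_add_card hp.disjoint b (M t) (hp.breaker_mono t) S]

theorem maker_step (hp : GreedyPlay a b boxes M B) (t : ℕ)
    (hdec : ∀ S : Finset (Fin n), S.Nonempty →
      (∀ i ∈ S, Free boxes (M t) (B (t + 1)) i ∧ Active a boxes (M t) i) →
      ∑ i ∈ S, danger b boxes (M t) (B (t + 1)) i ≤ budget b n #S)
    {S : Finset (Fin n)} (hS : S.Nonempty)
    (hSp : ∀ i ∈ S, Free boxes (M (t + 1)) (B (t + 1)) i ∧ Active a boxes (M (t + 1)) i) :
    ∑ i ∈ S, danger b boxes (M (t + 1)) (B (t + 1)) i ≤ budget b n #S - b := by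
  have hpool : ∀ i ∈ S, Free boxes (M t) (B (t + 1)) i ∧ Active a boxes (M t) i :=
    fun i hi => ⟨(hSp i hi).1.anti (hp.maker_subset t) subset_rfl,
      (hSp i hi).2.anti (hp.maker_subset t)⟩
  by_cases hex : ∃ i, Free boxes (M t) (B (t + 1)) i ∧ Active a boxes (M t) i
  · obtain ⟨m, x, hmfree, hmact, hmax, hx, hMx⟩ := hp.maker_move t hex
    rw [mem_sdiff, mem_union, not_or] at hx
    refine sum_le_budget_sub_of_greedy (by simp) ⟨hmfree, hmact⟩
      (fun i hi => hmax i hi.1 hi.2) hdec (fun i => ?_) hS hpool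
    rw [hMx]
    split_ifs with him
    · subst him
      exact (danger_insert b _ hx.1 hx.2.1).le
    · simpa using danger_anti_maker b _ (subset_insert x (M t))
  · obtain ⟨i, hi⟩ := hS
    exact absurd ⟨i, hpool i hi⟩ hex

theorem sum_danger_le_budget_sub (hp : GreedyPlay a b boxes M B) (t : ℕ)
    {S : Finset (Fin n)} (hS : S.Nonempty)
    (hSp : ∀ i ∈ S, Free boxes (M t) (B t) i ∧ Active a boxes (M t) i) :
    ∑ i ∈ S, danger b boxes (M t) (B t) i ≤ budget b n #S - b := by
  induction t generalizing S with
  | zero =>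
    have hzero : ∀ i, danger b boxes (M 0) (B 0) i = 0 := by
      simp [danger, hp.maker_zero, hp.breaker_zero]
    simp only [hzero, sum_const_zero, sub_nonneg]
    exact le_budget (by positivity) (card_pos.2 hS)
      ((card_le_univ S).trans_eq (Fintype.card_fin n))
  | succ t ih =>
    refine hp.maker_step t (fun S' hS' hS'p => hp.sum_danger_succ_le t (ih hS' fun i hi => ?_))
      hS hSp
    exact ⟨(hS'p i hi).1.anti subset_rfl (hp.breaker_mono t), (hS'p i hi).2⟩

theorem danger_succ_le_of_le (hp : GreedyPlay a b boxes M B) (t : ℕ) {i : Fin n}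
    (hact : Active a boxes (M t) i) (h : danger b boxes (M t) (B t) i ≤ b * harmonic n) :
    danger b boxes (M t) (B (t + 1)) i ≤ b * harmonic n := by
  by_cases hfree : Free boxes (M t) (B t) i
  · have := hp.sum_danger_succ_le t
      (hp.sum_danger_le_budget_sub t (singleton_nonempty i) (by simpa using ⟨hfree, hact⟩))
    simpa [budget_one] using this
  · rw [danger_eq_of_not_free b hfree (hp.breaker_mono t) (hp.breaker_new t)]
    exact h

theorem danger_le_harmonic (hp : GreedyPlay a b boxes M B) (t : ℕ) {i : Fin n}
    (hact : Active a boxes (M t) i) : danger b boxes (M t) (B t) i ≤ b * harmonic n := by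
  induction t with
  | zero =>
    simp only [danger, hp.maker_zero, hp.breaker_zero, empty_inter, card_empty, Nat.cast_zero,
      mul_zero, sub_zero, ← budget_one, budget]
    positivity
  | succ t ih =>
    have hact' := hact.anti (hp.maker_subset t)
    calc danger b boxes (M (t + 1)) (B (t + 1)) i
        ≤ danger b boxes (M t) (B (t + 1)) i := danger_anti_maker b _ (hp.maker_subset t)
      _ ≤ b * harmonic n := hp.danger_succ_le_of_le t hact' (ih hact')

end GreedyPlay

end MinBox

theorem minBox_danger_bound_general {α : Type*} [DecidableEq α]
    (n b : ℕ)
    (a : ℝ)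
    (boxes : Fin n → Finset α)
    (hdisj : ∀ i j, i ≠ j → Disjoint (boxes i) (boxes j))
    (M B : ℕ → Finset α)
    (hM0 : M 0 = ∅) (hB0 : B 0 = ∅)
    (hBmono : ∀ t, B t ⊆ B (t + 1))
    (hBbias : ∀ t, (B (t + 1) \ B t).card ≤ b)
    (hBnew : ∀ t, Disjoint (B (t + 1) \ B t) (M t))
    (hMakerMove : ∀ t,
      (∃ i, MinBox.Free boxes (M t) (B (t + 1)) i ∧ MinBox.Active a boxes (M t) i) →
      ∃ i x, MinBox.Free boxes (M t) (B (t + 1)) i ∧ MinBox.Active a boxes (M t) i ∧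
        (∀ j, MinBox.Free boxes (M t) (B (t + 1)) j →
          MinBox.Active a boxes (M t) j →
          MinBox.danger b boxes (M t) (B (t + 1)) j ≤
            MinBox.danger b boxes (M t) (B (t + 1)) i) ∧
        x ∈ boxes i \ (M t ∪ B (t + 1)) ∧ M (t + 1) = insert x (M t))
    (hMakerSkip : ∀ t,
      (¬ ∃ i, MinBox.Free boxes (M t) (B (t + 1)) i ∧ MinBox.Active a boxes (M t) i) →
      M (t + 1) = M t) :
    ∀ t i,
      (MinBox.Active a boxes (M t) i →
        MinBox.danger b boxes (M t) (B t) i ≤ (b : ℝ) * (Real.log n + 1)) ∧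
      (MinBox.Active a boxes (M t) i →
        MinBox.danger b boxes (M t) (B (t + 1)) i ≤ (b : ℝ) * (Real.log n + 1)) := by
  have hp : MinBox.GreedyPlay a b boxes M B :=
    ⟨hdisj, hM0, hB0, hBmono, hBbias, hBnew, hMakerMove, hMakerSkip⟩
  have hH : (b : ℝ) * harmonic n ≤ b * (Real.log n + 1) := by
    gcongr
    linarith [harmonic_le_one_add_log n]
  intro t i
  exact ⟨fun hact => (hp.danger_le_harmonic t hact).trans hH,
    fun hact => (hp.danger_succ_le_of_le t hact (hp.danger_le_harmonic t hact)).trans hH⟩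

/-- In the `MinBox(n, D, a, b)` game, if Maker always claims a free
element from a free active box of maximal danger, then throughout the game every active
box `F` satisfies `danger(F) ≤ b(ln n + 1)`.  A play is modelled by the increasing
sequences `M t`, `B t` of the players' elements: in round `t` Breaker first claims at
most `b` unclaimed elements, then Maker claims one element according to the above rule
(skipping his move if no free active box exists).  The danger bound holds both after
Breaker's move and after Maker's move of every round. -/
theorem minBox_danger_bound {α : Type*} [DecidableEq α]
    (n D b : ℕ) (hn : 0 < n) (hD : 0 < D) (hb : 0 < b)
    (a : ℝ) (ha0 : 0 < a) (ha1 : a < 1)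
    (boxes : Fin n → Finset α)
    (hdisj : ∀ i j, i ≠ j → Disjoint (boxes i) (boxes j))
    (hsize : ∀ i, D ≤ (boxes i).card)
    (M B : ℕ → Finset α)
    (hM0 : M 0 = ∅) (hB0 : B 0 = ∅)
    (hMboard : ∀ t, ∀ x ∈ M t, ∃ i, x ∈ boxes i)
    (hBboard : ∀ t, ∀ x ∈ B t, ∃ i, x ∈ boxes i)
    (hMB : ∀ t, Disjoint (M t) (B t))
    (hBmono : ∀ t, B t ⊆ B (t + 1))
    (hBbias : ∀ t, (B (t + 1) \ B t).card ≤ b)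
    (hBnew : ∀ t, Disjoint (B (t + 1) \ B t) (M t))
    (hMakerMove : ∀ t,
      (∃ i, MinBox.Free boxes (M t) (B (t + 1)) i ∧ MinBox.Active a boxes (M t) i) →
      ∃ i x, MinBox.Free boxes (M t) (B (t + 1)) i ∧ MinBox.Active a boxes (M t) i ∧
        (∀ j, MinBox.Free boxes (M t) (B (t + 1)) j →
          MinBox.Active a boxes (M t) j →
          MinBox.danger b boxes (M t) (B (t + 1)) j ≤
            MinBox.danger b boxes (M t) (B (t + 1)) i) ∧
        x ∈ boxes i \ (M t ∪ B (t + 1)) ∧ M (t + 1) = insert x (M t))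
    (hMakerSkip : ∀ t,
      (¬ ∃ i, MinBox.Free boxes (M t) (B (t + 1)) i ∧ MinBox.Active a boxes (M t) i) →
      M (t + 1) = M t) :
    ∀ t i,
      (MinBox.Active a boxes (M t) i →
        MinBox.danger b boxes (M t) (B t) i ≤ (b : ℝ) * (Real.log n + 1)) ∧
      (MinBox.Active a boxes (M t) i →
        MinBox.danger b boxes (M t) (B (t + 1)) i ≤ (b : ℝ) * (Real.log n + 1)) :=
  minBox_danger_bound_general n b a boxes hdisj M B hM0 hB0 hBmono hBbias hBnew hMakerMove
    hMakerSkip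
end
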